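/- arXiv:2009.00102 — 2 statements merged into one kernel-verified Lean document; each statement's English description precedes it below -/
import Mathlib

section
/- Let D ≥ 1, let K and L be constant skew-symmetric real D×D matrices, let S : ℝ^D → ℝ be continuously differentiable, and let z : ℝ × ℝ → ℝ^D, written z(t,x), be twice continuously differentiable and satisfy the multisymplectic PDE K ∂_t z + L ∂_x z = ∇S(z) at every point. Define the momentum density M(t,x) := ½ (∂_x z)·(K z) and the momentum flux I(t,x) := ½ z·(K ∂_t z) − S(z). Then ∂_t M + ∂_x I = 0 at every point (t,x) ∈ ℝ². -/
/-!
Differentiating by the product and chain rules,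
`∂_t M + ∂_x I = ½ (z_xt ⬝ K z + z ⬝ K z_tx) + z_x ⬝ K z_t - ∇S(z) ⬝ z_x`.
The bracket vanishes because `K` is skew and `z_xt = z_tx`. Substituting the PDE,
`∇S(z) ⬝ z_x = z_x ⬝ K z_t + z_x ⬝ L z_x`, and the last term vanishes because `L` is skew.
-/

open Matrix

/-- Gradient of `S : ℝ^D → ℝ`, componentwise via the Fréchet derivative. -/
noncomputable def grad {D : ℕ} (S : (Fin D → ℝ) → ℝ) (p : Fin D → ℝ) : Fin D → ℝ :=
  fun i => fderiv ℝ S p (Pi.single i 1)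

/-- Partial derivative in the first (time) variable. -/
noncomputable def pt {E : Type*} [NormedAddCommGroup E] [NormedSpace ℝ E]
    (z : ℝ × ℝ → E) (p : ℝ × ℝ) : E :=
  deriv (fun s => z (s, p.2)) p.1

/-- Partial derivative in the second (space) variable. -/
noncomputable def px {E : Type*} [NormedAddCommGroup E] [NormedSpace ℝ E]
    (z : ℝ × ℝ → E) (p : ℝ × ℝ) : E :=
  deriv (fun y => z (p.1, y)) p.2

section SkewSymmetric

variable {R n : Type*} [CommRing R] [Fintype n] {A : Matrix n n R}

theorem Matrix.dotProduct_mulVec_of_transpose_eq_neg (hA : Aᵀ = -A) (u v : n → R) :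
    u ⬝ᵥ A *ᵥ v = -(v ⬝ᵥ A *ᵥ u) := by
  rw [dotProduct_mulVec, ← mulVec_transpose, hA, neg_mulVec, neg_dotProduct, dotProduct_comm]

theorem Matrix.dotProduct_mulVec_self_of_transpose_eq_neg [IsAddTorsionFree R]
    (hA : Aᵀ = -A) (u : n → R) : u ⬝ᵥ A *ᵥ u = 0 :=
  self_eq_neg.mp (dotProduct_mulVec_of_transpose_eq_neg hA u u)

end SkewSymmetric

theorem grad_dotProduct {D : ℕ} (S : (Fin D → ℝ) → ℝ) (p v : Fin D → ℝ) :
    grad S p ⬝ᵥ v = fderiv ℝ S p v := by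
  conv_rhs => rw [← Finset.univ_sum_single v]
  simp only [map_sum, dotProduct, grad]
  refine Finset.sum_congr rfl fun i _ => ?_
  rw [mul_comm, ← smul_eq_mul, ← map_smul, ← Pi.single_smul', smul_eq_mul, mul_one]

section LineDerivatives

variable {𝕜 ι : Type*} [NontriviallyNormedField 𝕜] [Fintype ι] {u v : 𝕜 → ι → 𝕜}
  {u' v' : ι → 𝕜} {t : 𝕜}

theorem HasDerivAt.dotProduct (hu : HasDerivAt u u' t) (hv : HasDerivAt v v' t) :
    HasDerivAt (fun s => u s ⬝ᵥ v s) (u' ⬝ᵥ v t + u t ⬝ᵥ v') t := by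
  simp only [_root_.dotProduct, ← Finset.sum_add_distrib]
  exact HasDerivAt.fun_sum fun i _ => (hasDerivAt_pi.1 hu i).mul (hasDerivAt_pi.1 hv i)

theorem HasDerivAt.mulVec (A : Matrix ι ι 𝕜) (hv : HasDerivAt v v' t) :
    HasDerivAt (fun s => A *ᵥ v s) (A *ᵥ v') t :=
  hasDerivAt_pi.2 fun i => by
    simpa [Matrix.mulVec] using (hasDerivAt_const t (A i)).dotProduct hv

end LineDerivatives

section PartialDerivatives

variable {E : Type*} [NormedAddCommGroup E] [NormedSpace ℝ E] {f : ℝ × ℝ → E} {p : ℝ × ℝ}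

theorem hasDerivAt_pt (hf : DifferentiableAt ℝ f p) :
    HasDerivAt (fun s => f (s, p.2)) (pt f p) p.1 :=
  (hf.comp p.1 (differentiableAt_id.prodMk (differentiableAt_const p.2))).hasDerivAt

theorem hasDerivAt_px (hf : DifferentiableAt ℝ f p) :
    HasDerivAt (fun y => f (p.1, y)) (px f p) p.2 :=
  (hf.comp p.2 ((differentiableAt_const p.1).prodMk differentiableAt_id)).hasDerivAt

theorem pt_eq_fderiv (hf : DifferentiableAt ℝ f p) : pt f p = fderiv ℝ f p (1, 0) :=
  (hasDerivAt_pt hf).unique <| by simpa [Function.comp_def] using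
    hf.hasFDerivAt.comp_hasDerivAt p.1 ((hasDerivAt_id p.1).prodMk (hasDerivAt_const p.1 p.2))

theorem px_eq_fderiv (hf : DifferentiableAt ℝ f p) : px f p = fderiv ℝ f p (0, 1) :=
  (hasDerivAt_px hf).unique <| by simpa [Function.comp_def] using
    hf.hasFDerivAt.comp_hasDerivAt p.2 ((hasDerivAt_const p.2 p.1).prodMk (hasDerivAt_id p.2))

theorem ContDiff.pt {n : WithTop ℕ∞} (hf : ContDiff ℝ (n + 1) f) : ContDiff ℝ n (pt f) := by
  have hdiff : Differentiable ℝ f := hf.differentiable (by simp)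
  simpa only [funext fun q => pt_eq_fderiv (hdiff q)] using
    (hf.fderiv_right le_rfl).clm_apply contDiff_const

theorem ContDiff.px {n : WithTop ℕ∞} (hf : ContDiff ℝ (n + 1) f) : ContDiff ℝ n (px f) := by
  have hdiff : Differentiable ℝ f := hf.differentiable (by simp)
  simpa only [funext fun q => px_eq_fderiv (hdiff q)] using
    (hf.fderiv_right le_rfl).clm_apply contDiff_const

theorem pt_px_eq_px_pt (hf : ContDiff ℝ 2 f) : pt (px f) p = px (pt f) p := by
  have hdiff : Differentiable ℝ f := hf.differentiable (by simp)
  have hdiff' : Differentiable ℝ (fderiv ℝ f) :=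
    (hf.fderiv_right (m := 1) (by norm_num)).differentiable (by simp)
  have hsecond (v w : ℝ × ℝ) :
      fderiv ℝ (fun q => fderiv ℝ f q w) p v = fderiv ℝ (fderiv ℝ f) p v w := by
    rw [fderiv_clm_apply (hdiff' p) (differentiableAt_const w)]
    simp
  have hpt : pt f = fun q => fderiv ℝ f q (1, 0) := funext fun q => pt_eq_fderiv (hdiff q)
  have hpx : px f = fun q => fderiv ℝ f q (0, 1) := funext fun q => px_eq_fderiv (hdiff q)
  calc pt (px f) p = fderiv ℝ (fderiv ℝ f) p (1, 0) (0, 1) := by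
        rw [pt_eq_fderiv ((hf.px (n := 1)).differentiable (by simp) p), hpx, hsecond]
    _ = fderiv ℝ (fderiv ℝ f) p (0, 1) (1, 0) :=
        (hf.contDiffAt.isSymmSndFDerivAt (by simp)).eq _ _
    _ = px (pt f) p := by
        rw [px_eq_fderiv ((hf.pt (n := 1)).differentiable (by simp) p), hpt, hsecond]

end PartialDerivatives

theorem momentum_conservation_law_general
    (D : ℕ)
    (K L : Matrix (Fin D) (Fin D) ℝ)
    (hK : Kᵀ = -K) (hL : Lᵀ = -L)
    (S : (Fin D → ℝ) → ℝ) (hS : ContDiff ℝ 1 S)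
    (z : ℝ × ℝ → Fin D → ℝ) (hz : ContDiff ℝ 2 z)
    (hpde : ∀ p : ℝ × ℝ, K.mulVec (pt z p) + L.mulVec (px z p) = grad S (z p)) :
    ∀ p : ℝ × ℝ,
      pt (fun q => (1 / 2 : ℝ) * (px z q ⬝ᵥ K.mulVec (z q))) p
        + px (fun q => (1 / 2 : ℝ) * (z q ⬝ᵥ K.mulVec (pt z q)) - S (z q)) p = 0 := by
  intro p
  have hz' : Differentiable ℝ z := hz.differentiable (by simp)
  have hzt : Differentiable ℝ (pt z) := (hz.pt (n := 1)).differentiable (by simp)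
  have hzx : Differentiable ℝ (px z) := (hz.px (n := 1)).differentiable (by simp)
  have hM : pt (fun q => (1 / 2 : ℝ) * (px z q ⬝ᵥ K *ᵥ z q)) p
      = 1 / 2 * (pt (px z) p ⬝ᵥ K *ᵥ z p + px z p ⬝ᵥ K *ᵥ pt z p) :=
    (((hasDerivAt_pt (hzx p)).dotProduct ((hasDerivAt_pt (hz' p)).mulVec K)).const_mul _).deriv
  have hSz : HasDerivAt (fun y => S (z (p.1, y))) (grad S (z p) ⬝ᵥ px z p) p.2 := by
    rw [grad_dotProduct]
    exact (hS.differentiable (by simp) _).hasFDerivAt.comp_hasDerivAt p.2 (hasDerivAt_px (hz' p))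
  have hI : px (fun q => (1 / 2 : ℝ) * (z q ⬝ᵥ K *ᵥ pt z q) - S (z q)) p
      = 1 / 2 * (px z p ⬝ᵥ K *ᵥ pt z p + z p ⬝ᵥ K *ᵥ px (pt z) p) - grad S (z p) ⬝ᵥ px z p :=
    ((((hasDerivAt_px (hz' p)).dotProduct ((hasDerivAt_px (hzt p)).mulVec K)).const_mul _).sub
      hSz).deriv
  have hgrad : grad S (z p) ⬝ᵥ px z p = px z p ⬝ᵥ K *ᵥ pt z p := by
    rw [← hpde p, add_dotProduct, dotProduct_comm, dotProduct_comm (L *ᵥ _),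
      dotProduct_mulVec_self_of_transpose_eq_neg hL, add_zero]
  rw [hM, hI, hgrad, pt_px_eq_px_pt hz, dotProduct_mulVec_of_transpose_eq_neg hK (z p)]
  ring

/-- Momentum conservation law for multisymplectic PDEs:
`∂_t M + ∂_x I = 0` where `M = ½ (∂_x z)·(K z)` and `I = ½ z·(K ∂_t z) − S(z)`. -/
theorem momentum_conservation_law
    (D : ℕ) (hD : 1 ≤ D)
    (K L : Matrix (Fin D) (Fin D) ℝ)
    (hK : Kᵀ = -K) (hL : Lᵀ = -L)
    (S : (Fin D → ℝ) → ℝ) (hS : ContDiff ℝ 1 S)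
    (z : ℝ × ℝ → Fin D → ℝ) (hz : ContDiff ℝ 2 z)
    (hpde : ∀ p : ℝ × ℝ, K.mulVec (pt z p) + L.mulVec (px z p) = grad S (z p)) :
    ∀ p : ℝ × ℝ,
      pt (fun q => (1 / 2 : ℝ) * (px z q ⬝ᵥ K.mulVec (z q))) p
        + px (fun q => (1 / 2 : ℝ) * (z q ⬝ᵥ K.mulVec (pt z q)) - S (z q)) p = 0 :=
  momentum_conservation_law_general D K L hK hL S hS z hz hpde
end

section
/- Let D ≥ 1, let K and L be constant skew-symmetric real D×D matrices, let S : ℝ^D → ℝ be continuously differentiable, and let t₀ < t₁. Let Q = (t₀,t₁) × (0,1) with Lebesgue measure, let V be a closed subspace of the Hilbert space L²(Q; ℝ^D) such that for every f ∈ V the functions Kf and Lf (pointwise matrix multiplication) also belong to V, and let P denote the orthogonal projection of L²(Q; ℝ^D) onto V. Let Z : ℝ × ℝ → ℝ^D be continuously differentiable with the restriction of ∂_t Z to Q belonging to V, and suppose that for every φ ∈ V, ∫_Q ( K ∂_t Z + L ∂_x Z − ∇S(Z) )·φ dx dt = 0. Then ∫_Q (K ∂_t Z)·(∂_x Z) dx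 dt = ∫_Q ∇S(Z)·P(∂_x Z) dx dt. -/
/-!
Test the scheme with `P(∂ₓZ)`. Since `K ∂ₜZ ∈ V`, pairing it with `∂ₓZ` or with `P(∂ₓZ)` gives
the same result. Since `L` is skew and `V` is `L`-invariant,
`⟪L ∂ₓZ, P ∂ₓZ⟫ = -⟪∂ₓZ, L P ∂ₓZ⟫ = -⟪P ∂ₓZ, L P ∂ₓZ⟫ = 0`. What remains is the `∇S(Z)` term.
It is continuous on the bounded set `Q`, so it lies in `L²`. That makes every integral in the
scheme a genuine `L²` inner product, not a junk value.
-/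

open MeasureTheory Matrix

/-- Matrix multiplication as a continuous linear map on Euclidean space. -/
noncomputable def mulVecCLM {D : ℕ} (A : Matrix (Fin D) (Fin D) ℝ) :
    EuclideanSpace ℝ (Fin D) →L[ℝ] EuclideanSpace ℝ (Fin D) :=
  LinearMap.toContinuousLinearMap (Matrix.toEuclideanLin A)

open scoped InnerProductSpace

theorem ContDiff.continuous_gradient {F : Type*} [NormedAddCommGroup F] [InnerProductSpace ℝ F]
    [CompleteSpace F] {S : F → ℝ} (hS : ContDiff ℝ 1 S) : Continuous (gradient S) :=
  (InnerProductSpace.toDual ℝ F).symm.continuous.comp (hS.continuous_fderiv one_ne_zero)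

theorem Continuous.memLp_restrict_of_subset_isCompact {X E : Type*} [TopologicalSpace X]
    [MeasurableSpace X] [OpensMeasurableSpace X] [T2Space X] [NormedAddCommGroup E]
    [SecondCountableTopologyEither X E] {μ : Measure X} [IsFiniteMeasureOnCompacts μ] {g : X → E}
    (hg : Continuous g) {s k : Set X} (hk : IsCompact k) (hsk : s ⊆ k) (p : ENNReal) :
    MemLp g p (μ.restrict s) := by
  obtain ⟨M, hM⟩ := hk.exists_bound_of_continuousOn hg.continuousOn
  have : IsFiniteMeasure (μ.restrict k) := isFiniteMeasure_restrict.2 hk.measure_lt_top.ne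
  refine (MemLp.of_bound hg.aestronglyMeasurable M ?_).mono_measure
    (Measure.restrict_mono hsk le_rfl)
  filter_upwards [ae_restrict_mem hk.measurableSet] with x hx using hM x hx

theorem mulVecCLM_inner_left {D : ℕ} (A : Matrix (Fin D) (Fin D) ℝ)
    (x y : EuclideanSpace ℝ (Fin D)) :
    ⟪mulVecCLM A x, y⟫_ℝ = ⟪x, mulVecCLM Aᵀ y⟫_ℝ := by
  have h : Matrix.toEuclideanLin Aᵀ = LinearMap.adjoint (Matrix.toEuclideanLin A) := by
    rw [← Matrix.conjTranspose_eq_transpose_of_trivial]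
    exact Matrix.toEuclideanLin_conjTranspose_eq_adjoint A
  simp [mulVecCLM, h, LinearMap.adjoint_inner_right]

theorem mulVecCLM_inner_left_of_transpose_eq_neg {D : ℕ} {A : Matrix (Fin D) (Fin D) ℝ}
    (hA : Aᵀ = -A) (x y : EuclideanSpace ℝ (Fin D)) :
    ⟪mulVecCLM A x, y⟫_ℝ = -⟪x, mulVecCLM A y⟫_ℝ := by
  rw [mulVecCLM_inner_left, hA, ← inner_neg_right]
  simp [mulVecCLM]

namespace MeasureTheory.L2

variable {α E : Type*} [MeasurableSpace α] {μ : Measure α} [NormedAddCommGroup E]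
  [InnerProductSpace ℝ E]

theorem integral_inner_eq_inner {f g : α →₂[μ] E} {f' g' : α → E} (hf : f =ᵐ[μ] f')
    (hg : g =ᵐ[μ] g') : ∫ a, ⟪f' a, g' a⟫_ℝ ∂μ = ⟪f, g⟫_ℝ := by
  rw [inner_def]
  refine integral_congr_ae ?_
  filter_upwards [hf, hg] with a hfa hga
  rw [hfa, hga]

theorem inner_compLp_left_of_skew {T : E →L[ℝ] E} (hT : ∀ x y, ⟪T x, y⟫_ℝ = -⟪x, T y⟫_ℝ)
    (f g : α →₂[μ] E) : ⟪T.compLp f, g⟫_ℝ = -⟪f, T.compLp g⟫_ℝ := by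
  rw [← integral_inner_eq_inner (T.coeFn_compLp' f) (ae_eq_refl g),
    ← integral_inner_eq_inner (ae_eq_refl f) (T.coeFn_compLp' g), ← integral_neg]
  simp only [hT]

end MeasureTheory.L2

section Projection

variable {H : Type*} [NormedAddCommGroup H] [InnerProductSpace ℝ H] {V : Submodule ℝ H}
  {P : H → H}

theorem inner_eq_inner_proj_of_mem (hPorth : ∀ f, ∀ g ∈ V, ⟪f - P f, g⟫_ℝ = 0) {a : H}
    (ha : a ∈ V) (f : H) : ⟪a, f⟫_ℝ = ⟪a, P f⟫_ℝ := by
  have h := hPorth f a ha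
  rw [inner_sub_left, real_inner_comm a f, real_inner_comm a (P f)] at h
  linarith

theorem inner_self_eq_zero_of_skew {T : H → H} (hT : ∀ u v, ⟪T u, v⟫_ℝ = -⟪u, T v⟫_ℝ)
    (u : H) : ⟪T u, u⟫_ℝ = 0 := by
  have h := hT u u
  rw [real_inner_comm (T u)] at h
  linarith

theorem inner_proj_eq_zero_of_skew (hPmem : ∀ f, P f ∈ V)
    (hPorth : ∀ f, ∀ g ∈ V, ⟪f - P f, g⟫_ℝ = 0) {T : H → H}
    (hT : ∀ u v, ⟪T u, v⟫_ℝ = -⟪u, T v⟫_ℝ) (hTV : ∀ g ∈ V, T g ∈ V) (f : H) :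
    ⟪T f, P f⟫_ℝ = 0 := by
  calc ⟪T f, P f⟫_ℝ = -⟪T (P f), f⟫_ℝ := by rw [hT, real_inner_comm]
    _ = -⟪T (P f), P f⟫_ℝ := by rw [inner_eq_inner_proj_of_mem hPorth (hTV _ (hPmem f))]
    _ = 0 := by rw [inner_self_eq_zero_of_skew hT, neg_zero]

theorem inner_eq_inner_proj_of_inner_proj_eq_zero (hPmem : ∀ f, P f ∈ V)
    (hPorth : ∀ f, ∀ g ∈ V, ⟪f - P f, g⟫_ℝ = 0) {T : H → H}
    (hT : ∀ u v, ⟪T u, v⟫_ℝ = -⟪u, T v⟫_ℝ) (hTV : ∀ g ∈ V, T g ∈ V) {a c f : H} (ha : a ∈ V)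
    (h : ⟪a + T f - c, P f⟫_ℝ = 0) : ⟪a, f⟫_ℝ = ⟪c, P f⟫_ℝ := by
  rw [inner_sub_left, inner_add_left, inner_proj_eq_zero_of_skew hPmem hPorth hT hTV] at h
  rw [inner_eq_inner_proj_of_mem hPorth ha]
  linarith

end Projection

theorem scheme_tested_with_projected_spatial_derivative_general
    (D : ℕ)
    (K L : Matrix (Fin D) (Fin D) ℝ)
    (hL : Lᵀ = -L)
    (S : EuclideanSpace ℝ (Fin D) → ℝ) (hS : ContDiff ℝ 1 S)
    (t₀ t₁ : ℝ)
    (Q : Set (ℝ × ℝ)) (hQ : Q = Set.Ioo t₀ t₁ ×ˢ Set.Ioo (0 : ℝ) 1)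
    (μ : Measure (ℝ × ℝ)) (hμ : μ = volume.restrict Q)
    (V : Submodule ℝ (Lp (EuclideanSpace ℝ (Fin D)) 2 μ))
    (hVK : ∀ f ∈ V, (mulVecCLM K).compLp f ∈ V)
    (hVL : ∀ f ∈ V, (mulVecCLM L).compLp f ∈ V)
    -- `P` is the orthogonal projection of `L²(Q; ℝ^D)` onto `V`
    (P : Lp (EuclideanSpace ℝ (Fin D)) 2 μ → Lp (EuclideanSpace ℝ (Fin D)) 2 μ)
    (hPmem : ∀ f, P f ∈ V)
    (hPorth : ∀ f, ∀ g ∈ V, (inner ℝ (f - P f) g : ℝ) = 0)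
    (Z : ℝ × ℝ → EuclideanSpace ℝ (Fin D)) (hZ : ContDiff ℝ 1 Z)
    (hZt : MemLp (pt Z) 2 μ) (hZtV : hZt.toLp (pt Z) ∈ V)
    (hZx : MemLp (px Z) 2 μ)
    (hscheme : ∀ φ ∈ V,
      (∫ p, (inner ℝ (mulVecCLM K (pt Z p) + mulVecCLM L (px Z p)
          - gradient S (Z p)) (φ p) : ℝ) ∂μ) = 0) :
    (∫ p, (inner ℝ (mulVecCLM K (pt Z p)) (px Z p) : ℝ) ∂μ)
      = ∫ p, (inner ℝ (gradient S (Z p)) (P (hZx.toLp (px Z)) p) : ℝ) ∂μ := by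
  have hgrad : MemLp (fun p => gradient S (Z p)) 2 μ := hμ ▸
    (hS.continuous_gradient.comp hZ.continuous).memLp_restrict_of_subset_isCompact
      (isCompact_Icc.prod isCompact_Icc)
      (hQ ▸ Set.prod_mono Set.Ioo_subset_Icc_self Set.Ioo_subset_Icc_self) 2
  set F := hZx.toLp (px Z)
  set A := (mulVecCLM K).compLp (hZt.toLp (pt Z))
  set B := (mulVecCLM L).compLp F
  set C := hgrad.toLp _
  have hA : A =ᵐ[μ] fun p => mulVecCLM K (pt Z p) := by
    filter_upwards [(mulVecCLM K).coeFn_compLp (hZt.toLp (pt Z)), hZt.coeFn_toLp] with p h₁ h₂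
    rw [h₁, h₂]
  have hB : B =ᵐ[μ] fun p => mulVecCLM L (px Z p) := by
    filter_upwards [(mulVecCLM L).coeFn_compLp F, hZx.coeFn_toLp] with p h₁ h₂
    rw [h₁, h₂]
  have hABC : A + B - C =ᵐ[μ] fun p => mulVecCLM K (pt Z p) + mulVecCLM L (px Z p)
      - gradient S (Z p) := by
    filter_upwards [Lp.coeFn_sub (A + B) C, Lp.coeFn_add A B, hA, hB, hgrad.coeFn_toLp]
      with p h₁ h₂ h₃ h₄ h₅
    rw [h₁, Pi.sub_apply, h₂, Pi.add_apply, h₃, h₄, h₅]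
  have htested : ⟪A + B - C, P F⟫_ℝ = 0 := by
    rw [← L2.integral_inner_eq_inner hABC (ae_eq_refl _)]
    exact hscheme _ (hPmem F)
  calc _ = ⟪A, F⟫_ℝ := L2.integral_inner_eq_inner hA hZx.coeFn_toLp
    _ = ⟪C, P F⟫_ℝ := inner_eq_inner_proj_of_inner_proj_eq_zero hPmem hPorth
        (L2.inner_compLp_left_of_skew (mulVecCLM_inner_left_of_transpose_eq_neg hL)) hVL
        (hVK _ hZtV) htested
    _ = _ := (L2.integral_inner_eq_inner hgrad.coeFn_toLp (ae_eq_refl _)).symm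

/-- The key identity in the proof of the discrete momentum conservation law:
testing the scheme with the `L²(Q)` orthogonal projection `P(∂_x Z)` of `∂_x Z`
onto the test space `V` gives
`∫_Q (K ∂_t Z)·(∂_x Z) = ∫_Q ∇S(Z)·P(∂_x Z)`. -/
theorem scheme_tested_with_projected_spatial_derivative
    (D : ℕ) (hD : 1 ≤ D)
    (K L : Matrix (Fin D) (Fin D) ℝ)
    (hK : Kᵀ = -K) (hL : Lᵀ = -L)
    (S : EuclideanSpace ℝ (Fin D) → ℝ) (hS : ContDiff ℝ 1 S)
    (t₀ t₁ : ℝ) (ht : t₀ < t₁)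
    (Q : Set (ℝ × ℝ)) (hQ : Q = Set.Ioo t₀ t₁ ×ˢ Set.Ioo (0 : ℝ) 1)
    (μ : Measure (ℝ × ℝ)) (hμ : μ = volume.restrict Q)
    (V : Submodule ℝ (Lp (EuclideanSpace ℝ (Fin D)) 2 μ))
    (hVclosed : IsClosed (V : Set (Lp (EuclideanSpace ℝ (Fin D)) 2 μ)))
    (hVK : ∀ f ∈ V, (mulVecCLM K).compLp f ∈ V)
    (hVL : ∀ f ∈ V, (mulVecCLM L).compLp f ∈ V)
    -- `P` is the orthogonal projection of `L²(Q; ℝ^D)` onto `V`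
    (P : Lp (EuclideanSpace ℝ (Fin D)) 2 μ → Lp (EuclideanSpace ℝ (Fin D)) 2 μ)
    (hPmem : ∀ f, P f ∈ V)
    (hPorth : ∀ f, ∀ g ∈ V, (inner ℝ (f - P f) g : ℝ) = 0)
    (Z : ℝ × ℝ → EuclideanSpace ℝ (Fin D)) (hZ : ContDiff ℝ 1 Z)
    (hZt : MemLp (pt Z) 2 μ) (hZtV : hZt.toLp (pt Z) ∈ V)
    (hZx : MemLp (px Z) 2 μ)
    (hscheme : ∀ φ ∈ V,
      (∫ p, (inner ℝ (mulVecCLM K (pt Z p) + mulVecCLM L (px Z p)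
          - gradient S (Z p)) (φ p) : ℝ) ∂μ) = 0) :
    (∫ p, (inner ℝ (mulVecCLM K (pt Z p)) (px Z p) : ℝ) ∂μ)
      = ∫ p, (inner ℝ (gradient S (Z p)) (P (hZx.toLp (px Z)) p) : ℝ) ∂μ :=
  scheme_tested_with_projected_spatial_derivative_general D K L hL S hS t₀ t₁ Q hQ μ hμ V hVK hVL P
    hPmem hPorth Z hZ hZt hZtV hZx hscheme
end
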